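/- If ∇ is a connection on a Lie algebra such that both ∇ and its dual connection ∇̄ are flat (R = R̄ = 0), then the torsion T of ∇ is a Lie bracket: it is bilinear, skew-symmetric, and satisfies the Jacobi identity. -/

import Mathlib

/-!
Since `T(X, Y) = ∇_X Y - ∇̄_X Y`, the dual connection is `∇̄ = ∇ - T`, and expanding its curvature gives
`R̄(X,Y)Z = R(X,Y)Z - (∇_X T)(Y,Z) + (∇_Y T)(X,Z) - T(T(X,Y),Z) + T(X,T(Y,Z)) - T(Y,T(X,Z))`.
Together with the first Bianchi identity
`∑_cyc R(X,Y)Z = ∑_cyc ((∇_X T)(Y,Z) + T(T(X,Y),Z))`, flatness of `∇` and `∇̄` forces `∇T = 0`,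
after which the Bianchi identity is exactly the Jacobi identity for `T`.
-/

/-- Torsion of a connection on a Lie algebra. -/
def torsion {L : Type*} [LieRing L] (D : L → L → L) (X Y : L) : L := D X Y - D Y X - ⁅X, Y⁆

/-- Curvature of a connection on a Lie algebra. -/
def curvature {L : Type*} [LieRing L] (D : L → L → L) (X Y Z : L) : L :=
  D X (D Y Z) - D Y (D X Z) - D ⁅X, Y⁆ Z

/-- Dual connection. -/
def dualConn {L : Type*} [LieRing L] (D : L → L → L) (X Y : L) : L := D Y X + ⁅X, Y⁆

section LieRing

variable {L : Type*} [LieRing L]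

/-- `(∇_X B)(Y, Z)` for a connection `∇ = D` and a `(1,2)`-tensor `B`. -/
def covariantDeriv (D B : L → L → L) (X Y Z : L) : L :=
  D X (B Y Z) - B (D X Y) Z - B Y (D X Z)

theorem torsion_swap (D : L → L → L) (X Y : L) : torsion D Y X = -torsion D X Y := by
  rw [torsion, torsion, ← lie_skew]
  abel

variable (D : L →+ L →+ L)

theorem torsion_neg_right (X Y : L) : torsion (D · ·) X (-Y) = -torsion (D · ·) X Y := by
  simp only [torsion, map_neg, AddMonoidHom.neg_apply, lie_neg]
  abel

theorem covariantDeriv_torsion_swap (X Y Z : L) :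
    covariantDeriv (D · ·) (torsion (D · ·)) X Z Y
      = -covariantDeriv (D · ·) (torsion (D · ·)) X Y Z := by
  simp only [covariantDeriv, torsion_swap _ Z Y, torsion_swap _ Z, torsion_swap _ (D X Z), map_neg]
  abel

theorem curvature_dualConn (X Y Z : L) :
    curvature (dualConn (D · ·)) X Y Z = curvature (D · ·) X Y Z
      - covariantDeriv (D · ·) (torsion (D · ·)) X Y Z
      + covariantDeriv (D · ·) (torsion (D · ·)) Y X Z
      - torsion (D · ·) (torsion (D · ·) X Y) Z
      + torsion (D · ·) X (torsion (D · ·) Y Z)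
      - torsion (D · ·) Y (torsion (D · ·) X Z) := by
  simp only [curvature, dualConn, covariantDeriv, torsion, map_add, map_sub,
    AddMonoidHom.add_apply, AddMonoidHom.sub_apply, lie_add, lie_sub, sub_lie]
  abel

theorem curvature_first_bianchi (X Y Z : L) :
    curvature (D · ·) X Y Z + curvature (D · ·) Y Z X + curvature (D · ·) Z X Y
      = covariantDeriv (D · ·) (torsion (D · ·)) X Y Z
        + covariantDeriv (D · ·) (torsion (D · ·)) Y Z X
        + covariantDeriv (D · ·) (torsion (D · ·)) Z X Y
        + torsion (D · ·) (torsion (D · ·) X Y) Z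
        + torsion (D · ·) (torsion (D · ·) Y Z) X
        + torsion (D · ·) (torsion (D · ·) Z X) Y := by
  have jacobi := lie_jacobi X Y Z
  rw [← lie_skew X ⁅Y, Z⁆, ← lie_skew Y ⁅Z, X⁆, ← lie_skew Z ⁅X, Y⁆] at jacobi
  simp only [curvature, covariantDeriv, torsion, map_sub, AddMonoidHom.sub_apply, sub_lie,
    ← lie_skew (D X Z) Y, ← lie_skew (D Y X) Z, ← lie_skew (D Z Y) X]
  rw [← sub_eq_zero, ← jacobi]
  abel

section Flat

variable {D}
variable (hR : ∀ X Y Z : L, curvature (D · ·) X Y Z = 0)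
  (hRbar : ∀ X Y Z : L, curvature (dualConn (D · ·)) X Y Z = 0)
include hR hRbar

theorem covariantDeriv_torsion_eq_zero_of_flat (X Y Z : L) :
    covariantDeriv (D · ·) (torsion (D · ·)) Z X Y = 0 := by
  have dual := curvature_dualConn D X Y Z
  have bianchi := curvature_first_bianchi D X Y Z
  rw [hRbar, hR] at dual
  rw [hR, hR, hR] at bianchi
  rw [covariantDeriv_torsion_swap D Y Z X, torsion_swap _ Z X, torsion_neg_right,
    torsion_swap _ (torsion _ Y Z) X, torsion_swap _ (torsion _ Z X) Y] at dual
  linear_combination (norm := abel) -bianchi - dual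

theorem torsion_jacobi_of_flat (X Y Z : L) :
    torsion (D · ·) X (torsion (D · ·) Y Z) + torsion (D · ·) Y (torsion (D · ·) Z X)
      + torsion (D · ·) Z (torsion (D · ·) X Y) = 0 := by
  have bianchi := curvature_first_bianchi D X Y Z
  simp only [hR, covariantDeriv_torsion_eq_zero_of_flat hR hRbar] at bianchi
  rw [torsion_swap _ Z (torsion _ X Y), torsion_swap _ X (torsion _ Y Z),
    torsion_swap _ Y (torsion _ Z X)] at bianchi
  linear_combination (norm := abel) bianchi

end Flat

end LieRing

section LieAlgebra

variable {R L : Type*} [CommRing R] [LieRing L] [LieAlgebra R L] (D : L →ₗ[R] L →ₗ[R] L)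

theorem isLinearMap_torsion_left (Y : L) : IsLinearMap R (fun X => torsion (D · ·) X Y) where
  map_add X X' := by
    simp only [torsion, map_add, LinearMap.add_apply, add_lie]
    abel
  map_smul c X := by
    simp only [torsion, map_smul, LinearMap.smul_apply, smul_lie, smul_sub]

theorem isLinearMap_torsion_right (X : L) : IsLinearMap R (fun Y => torsion (D · ·) X Y) where
  map_add Y Y' := by
    simp only [torsion, map_add, LinearMap.add_apply, lie_add]
    abel
  map_smul c Y := by
    simp only [torsion, map_smul, LinearMap.smul_apply, lie_smul, smul_sub]

end LieAlgebra

theorem torsion_is_lie_bracket_general {K : Type*} [Field K]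
    {L : Type*} [LieRing L] [LieAlgebra K L] (D : L →ₗ[K] L →ₗ[K] L)
    (hR : ∀ X Y Z : L, curvature (fun X Y => D X Y) X Y Z = 0)
    (hRbar : ∀ X Y Z : L, curvature (dualConn (fun X Y => D X Y)) X Y Z = 0) :
    (∀ Y : L, IsLinearMap K (fun X => torsion (fun X Y => D X Y) X Y)) ∧
    (∀ X : L, IsLinearMap K (fun Y => torsion (fun X Y => D X Y) X Y)) ∧
    (∀ X Y : L, torsion (fun X Y => D X Y) X Y = - torsion (fun X Y => D X Y) Y X) ∧
    (∀ X Y Z : L,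
      torsion (fun X Y => D X Y) X (torsion (fun X Y => D X Y) Y Z)
      + torsion (fun X Y => D X Y) Y (torsion (fun X Y => D X Y) Z X)
      + torsion (fun X Y => D X Y) Z (torsion (fun X Y => D X Y) X Y) = 0) :=
  ⟨isLinearMap_torsion_left D, isLinearMap_torsion_right D, fun X Y => torsion_swap _ Y X,
    torsion_jacobi_of_flat (D := LinearMap.toAddMonoidHom'.comp D.toAddMonoidHom) hR hRbar⟩

/-- If `R = R̄ = 0`, then the torsion `T` is a Lie bracket:
bilinear, skew-symmetric, and Jacobi. -/
theorem torsion_is_lie_bracket {K : Type*} [Field K] [CharZero K]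
    {L : Type*} [LieRing L] [LieAlgebra K L] (D : L →ₗ[K] L →ₗ[K] L)
    (hR : ∀ X Y Z : L, curvature (fun X Y => D X Y) X Y Z = 0)
    (hRbar : ∀ X Y Z : L, curvature (dualConn (fun X Y => D X Y)) X Y Z = 0) :
    (∀ Y : L, IsLinearMap K (fun X => torsion (fun X Y => D X Y) X Y)) ∧
    (∀ X : L, IsLinearMap K (fun Y => torsion (fun X Y => D X Y) X Y)) ∧
    (∀ X Y : L, torsion (fun X Y => D X Y) X Y = - torsion (fun X Y => D X Y) Y X) ∧
    (∀ X Y Z : L,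
      torsion (fun X Y => D X Y) X (torsion (fun X Y => D X Y) Y Z)
      + torsion (fun X Y => D X Y) Y (torsion (fun X Y => D X Y) Z X)
      + torsion (fun X Y => D X Y) Z (torsion (fun X Y => D X Y) X Y) = 0) :=
  torsion_is_lie_bracket_general D hR hRbar
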